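/- Let k ≥ m ≥ 1, let U ⊆ ℂ^k and V ⊆ ℂ^m be open sets, and let π : ℂ^k → ℂ^m be holomorphic on U with π(U) ⊆ V, such that at every point of U the complex derivative of π : ℂ^k → ℂ^m is surjective (i.e., π is a holomorphic submersion on U). Let g : ℂ^m → [0, ∞] be a measurable function. If g is locally integrable on V with respect to Lebesgue measure on ℂ^m, then g ∘ π is locally integrable on U with respect to Lebesgue measure on ℂ^k. (This is the local coordinate form of the inclusion π*𝒥(φ) ⊆ 𝒥(π*φ) for a smooth morphism π, proved by factoring π locally as the composition of an étale map and a projection.) -/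

import Mathlib

/-!
Fix `x₀ ∈ U`. Over `ℝ`, pair `π` with a linear projection `P` onto `ker Dπ(x₀)`: the map
`Φ = (π, P) : ℂ^k → ℂ^m × ker Dπ(x₀)` has invertible derivative at `x₀`. Cauchy estimates make
`Dπ` continuous, so `Φ` is even strictly differentiable at `x₀`, and then it can shrink Lebesgue
measure only by a bounded factor near `x₀`: `μ a ≤ C ν (Φ '' a)`. Consequently
`∫_s g(π x) dx ≤ C ∫_{t × B} g(y) d(y, z) = C (∫_t g) vol(B) < ∞` for a small neighbourhood `s`.
-/

open MeasureTheory

/-- A `[0,∞]`-valued function is locally integrable on `s` if every point of `s` has a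
neighborhood (within `s`) on which the (lower) integral of `g` is finite. -/
def ELocallyIntegrableOn {α : Type*} [MeasurableSpace α] [TopologicalSpace α]
    (g : α → ENNReal) (s : Set α) (μ : Measure α) : Prop :=
  ∀ x ∈ s, ∃ t ∈ nhdsWithin x s, ∫⁻ y in t, g y ∂μ < ⊤

open Metric Set Filter Topology
open scoped NNReal ENNReal

theorem DifferentiableOn.continuousOn_fderiv_of_isOpen {E F : Type*}
    [NormedAddCommGroup E] [NormedSpace ℂ E] [NormedAddCommGroup F] [NormedSpace ℂ F]
    {f : E → F} {U : Set E} (hf : DifferentiableOn ℂ f U) (hU : IsOpen U) :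
    ContinuousOn (fderiv ℂ f) U := by
  intro x₀ hx₀
  refine ContinuousAt.continuousWithinAt (Metric.continuousAt_iff.2 fun ε hε => ?_)
  have hlin := (hf.differentiableAt (hU.mem_nhds hx₀)).hasFDerivAt.isLittleO.def
    (by positivity : 0 < ε / 4)
  obtain ⟨ρ, hρ, hball⟩ := Metric.eventually_nhds_iff_ball.1 (hlin.and (hU.eventually_mem hx₀))
  refine ⟨ρ / 2, by positivity, fun {x} hx => ?_⟩
  set R : E → F := fun y => f y - f x₀ - fderiv ℂ f x₀ (y - x₀)
  -- `f - Df(x₀)` oscillates by `O(ε ρ)` on `ball x (ρ/2)`, so Cauchy's estimate bounds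
  -- its derivative at `x`, which is `Df(x) - Df(x₀)`, by `O(ε)`.
  have hball_sub : ball x (ρ / 2) ⊆ ball x₀ ρ := fun y hy => by
    simp only [mem_ball] at hx hy ⊢
    linarith [dist_triangle y x x₀]
  have hxU : x ∈ U := (hball x (hball_sub (mem_ball_self (by positivity)))).2
  have hdiff : DifferentiableOn ℂ (fun y => f y - fderiv ℂ f x₀ y) (ball x (ρ / 2)) :=
    fun y hy => ((hf.differentiableAt (hU.mem_nhds (hball y (hball_sub hy)).2)).sub
      (fderiv ℂ f x₀).differentiableAt).differentiableWithinAt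
  have hmaps : MapsTo (fun y => f y - fderiv ℂ f x₀ y) (ball x (ρ / 2))
      (closedBall (f x - fderiv ℂ f x₀ x) (3 * ε * ρ / 8)) := by
    intro y hy
    have hRy := (hball y (hball_sub hy)).1
    have hRx := (hball x (hball_sub (mem_ball_self (by positivity)))).1
    have hy' := mem_ball.1 (hball_sub hy)
    rw [mem_closedBall, dist_eq_norm]
    calc ‖f y - fderiv ℂ f x₀ y - (f x - fderiv ℂ f x₀ x)‖ = ‖R y - R x‖ := by
          simp only [R, map_sub]; congr 1; abel
      _ ≤ ‖R y‖ + ‖R x‖ := norm_sub_le _ _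
      _ ≤ ε / 4 * ‖y - x₀‖ + ε / 4 * ‖x - x₀‖ := add_le_add hRy hRx
      _ ≤ ε / 4 * ρ + ε / 4 * (ρ / 2) := by
          rw [← dist_eq_norm, ← dist_eq_norm]; gcongr
      _ = 3 * ε * ρ / 8 := by ring
  have hcauchy := Complex.norm_fderiv_le_div_of_mapsTo_ball hdiff hmaps (by positivity)
  have hderiv : fderiv ℂ (fun y => f y - fderiv ℂ f x₀ y) x = fderiv ℂ f x - fderiv ℂ f x₀ :=
    ((hf.differentiableAt (hU.mem_nhds hxU)).hasFDerivAt.sub (fderiv ℂ f x₀).hasFDerivAt).fderiv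
  rw [hderiv] at hcauchy
  rw [dist_eq_norm]
  calc ‖fderiv ℂ f x - fderiv ℂ f x₀‖ ≤ 3 * ε * ρ / 8 / (ρ / 2) := hcauchy
    _ = 3 * ε / 4 := by field_simp; ring
    _ < ε := by linarith

theorem DifferentiableOn.hasStrictFDerivAt_of_isOpen {E F : Type*}
    [NormedAddCommGroup E] [NormedSpace ℂ E] [NormedAddCommGroup F] [NormedSpace ℂ F]
    {f : E → F} {U : Set E} (hf : DifferentiableOn ℂ f U) (hU : IsOpen U) {x : E} (hx : x ∈ U) :
    HasStrictFDerivAt f (fderiv ℂ f x) x :=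
  hasStrictFDerivAt_of_hasFDerivAt_of_continuousAt
    (hU.eventually_mem hx |>.mono fun _ hy => (hf.differentiableAt (hU.mem_nhds hy)).hasFDerivAt)
    ((hf.continuousOn_fderiv_of_isOpen hU).continuousAt (hU.mem_nhds hx))

section LocalDiffeomorphism

variable {E E' : Type*} [NormedAddCommGroup E] [NormedSpace ℝ E] [FiniteDimensional ℝ E]
  [MeasurableSpace E] [BorelSpace E] [NormedAddCommGroup E'] [NormedSpace ℝ E']
  [FiniteDimensional ℝ E'] [MeasurableSpace E'] [BorelSpace E']
  (μ : Measure E) [μ.IsAddHaarMeasure] (ν : Measure E') [ν.IsAddHaarMeasure]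
  {Φ : E → E'} {A : E ≃L[ℝ] E'} {x₀ : E}

theorem HasStrictFDerivAt.exists_mem_nhds_measure_le_mul_measure_image
    (hΦ : HasStrictFDerivAt Φ (A : E →L[ℝ] E') x₀) :
    ∃ C : ℝ≥0∞, C ≠ ∞ ∧ ∃ s ∈ 𝓝 x₀, ContinuousOn Φ s ∧ ∀ a ⊆ s, μ a ≤ C * ν (Φ '' a) := by
  have hΨ : HasStrictFDerivAt (fun x => A.symm (Φ x)) (ContinuousLinearMap.id ℝ E) x₀ := by
    simpa using A.symm.hasStrictFDerivAt.comp x₀ hΦ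
  obtain ⟨δ, hδ, hδpos⟩ := ((mul_le_addHaar_image_of_lt_det μ (ContinuousLinearMap.id ℝ E)
    (m := 2⁻¹) (by simp [ContinuousLinearMap.det])).and self_mem_nhdsWithin).exists
  obtain ⟨s, hs, happrox⟩ := hΨ.approximates_deriv_on_nhds (Or.inr hδpos)
  -- The image of `μ` under `A` is a Haar measure on `E'`, hence a multiple of `ν`.
  set c := (μ.map A).addHaarScalarFactor ν
  refine ⟨2 * c, by finiteness, s, hs, ?_, fun a ha => ?_⟩
  · simpa [Function.comp_def] using A.continuous.comp_continuousOn happrox.continuousOn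
  · have himage : (fun x => A.symm (Φ x)) '' a = A ⁻¹' (Φ '' a) := by
      rw [← image_image, ContinuousLinearEquiv.image_symm_eq_preimage]
    calc μ a = 2 * (2⁻¹ * μ a) := by
          rw [← mul_assoc, ENNReal.mul_inv_cancel two_ne_zero ENNReal.ofNat_ne_top, one_mul]
      _ ≤ 2 * μ (A ⁻¹' (Φ '' a)) := by
          rw [← himage]; gcongr; exact_mod_cast hδ a _ (happrox.mono_set ha)
      _ ≤ 2 * μ.map A (Φ '' a) := by
          gcongr; exact Measure.le_map_apply A.continuous.aemeasurable _
      _ = 2 * c * ν (Φ '' a) := by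
          rw [Measure.isAddLeftInvariant_eq_smul (μ.map A) ν, Measure.smul_apply,
            ENNReal.smul_def, smul_eq_mul, mul_assoc]

theorem HasStrictFDerivAt.exists_mem_nhds_lintegral_comp_lt_top
    (hΦ : HasStrictFDerivAt Φ (A : E →L[ℝ] E') x₀) {h : E' → ℝ≥0∞} (hh : Measurable h)
    {t : Set E'} (ht : t ∈ 𝓝 (Φ x₀)) (hint : ∫⁻ y in t, h y ∂ν < ∞) :
    ∃ s ∈ 𝓝 x₀, ∫⁻ x in s, h (Φ x) ∂μ < ∞ := by
  obtain ⟨C, hC, s₀, hs₀, hcont, hle⟩ := hΦ.exists_mem_nhds_measure_le_mul_measure_image μ ν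
  obtain ⟨s, hs, hs_closed, hss₀⟩ := exists_mem_nhds_isClosed_subset
    (inter_mem hs₀ (hΦ.continuousAt.preimage_mem_nhds ht))
  have hΦs : AEMeasurable Φ (μ.restrict s) :=
    (hcont.mono fun x hx => (hss₀ hx).1).aemeasurable hs_closed.measurableSet
  have hmap : (μ.restrict s).map Φ ≤ C • ν.restrict t := by
    refine Measure.le_iff.2 fun b hb => ?_
    rw [Measure.map_apply_of_aemeasurable hΦs hb, Measure.restrict_apply' hs_closed.measurableSet,
      Measure.smul_apply, smul_eq_mul, Measure.restrict_apply hb]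
    refine (hle _ fun x hx => (hss₀ hx.2).1).trans ?_
    gcongr
    rintro _ ⟨x, hx, rfl⟩
    exact ⟨hx.1, (hss₀ hx.2).2⟩
  refine ⟨s, hs, ?_⟩
  calc ∫⁻ x in s, h (Φ x) ∂μ = ∫⁻ y, h y ∂(μ.restrict s).map Φ :=
        (lintegral_map' hh.aemeasurable hΦs).symm
    _ ≤ ∫⁻ y, h y ∂(C • ν.restrict t) := lintegral_mono' hmap le_rfl
    _ = C * ∫⁻ y in t, h y ∂ν := lintegral_smul_measure _ _
    _ < ∞ := ENNReal.mul_lt_top hC.lt_top hint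

end LocalDiffeomorphism

theorem MeasureTheory.setLIntegral_prod_comp_fst {α β : Type*} [MeasurableSpace α]
    [MeasurableSpace β] (μ : Measure α) (ν : Measure β) [SFinite μ] [SFinite ν] {f : α → ℝ≥0∞}
    (hf : Measurable f) (s : Set α) (t : Set β) :
    ∫⁻ z in s ×ˢ t, f z.1 ∂μ.prod ν = (∫⁻ x in s, f x ∂μ) * ν t := by
  rw [← Measure.prod_restrict]
  simpa using lintegral_prod_mul (μ := μ.restrict s) (ν := ν.restrict t) hf.aemeasurable
    (aemeasurable_const (b := (1 : ℝ≥0∞)))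

theorem bertini_submersion_case_general (k m : ℕ)
    (U : Set (Fin k → ℂ)) (V : Set (Fin m → ℂ)) (hU : IsOpen U) (hV : IsOpen V)
    (π : (Fin k → ℂ) → (Fin m → ℂ)) (hπ : DifferentiableOn ℂ π U)
    (hUV : Set.MapsTo π U V)
    (hsub : ∀ x ∈ U, Function.Surjective (fderiv ℂ π x))
    (g : (Fin m → ℂ) → ENNReal) (hg : Measurable g)
    (h : ELocallyIntegrableOn g V volume) :
    ELocallyIntegrableOn (g ∘ π) U volume := by
  intro x₀ hx₀
  set π' := (fderiv ℂ π x₀).restrictScalars ℝ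
  have hπ' : HasStrictFDerivAt π π' x₀ := (hπ.hasStrictFDerivAt_of_isOpen hU hx₀).restrictScalars ℝ
  -- `φ.prodFun = (π, P)` with `P` a projection onto `ker π'`; its derivative at `x₀` is invertible.
  set φ := hπ'.implicitFunctionDataOfComplemented π π' (LinearMap.range_eq_top.2 (hsub x₀ hx₀))
    π'.ker_closedComplemented_of_finiteDimensional_range
  have := Measure.prod.instIsAddHaarMeasure (volume : Measure (Fin m → ℂ))
    (Measure.addHaar : Measure (LinearMap.ker (π' : (Fin k → ℂ) →ₗ[ℝ] (Fin m → ℂ))))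
  obtain ⟨t, ht, hti⟩ := h (π x₀) (hUV hx₀)
  rw [nhdsWithin_eq_nhds.2 (hV.mem_nhds (hUV hx₀))] at ht
  obtain ⟨s, hs, hsi⟩ := φ.hasStrictFDerivAt.exists_mem_nhds_lintegral_comp_lt_top volume
    (volume.prod Measure.addHaar) (h := fun z => g z.1) (hg.comp measurable_fst)
    (prod_mem_nhds ht (closedBall_mem_nhds (φ.rightFun x₀) one_pos)) (by
      rw [setLIntegral_prod_comp_fst _ _ hg]
      exact ENNReal.mul_lt_top hti (isCompact_closedBall _ _).measure_lt_top)
  exact ⟨s, mem_nhdsWithin_of_mem_nhds hs, hsi⟩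

/-- **Submersion case**: if `π : ℂ^k → ℂ^m` is holomorphic on `U` with surjective
derivative at every point of `U` (holomorphic submersion), `π(U) ⊆ V`, and `g` is
locally integrable on the open set `V`, then `g ∘ π` is locally integrable on `U`. -/
theorem bertini_submersion_case (k m : ℕ) (hm : 1 ≤ m) (hkm : m ≤ k)
    (U : Set (Fin k → ℂ)) (V : Set (Fin m → ℂ)) (hU : IsOpen U) (hV : IsOpen V)
    (π : (Fin k → ℂ) → (Fin m → ℂ)) (hπ : DifferentiableOn ℂ π U)
    (hUV : Set.MapsTo π U V)
    (hsub : ∀ x ∈ U, Function.Surjective (fderiv ℂ π x))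
    (g : (Fin m → ℂ) → ENNReal) (hg : Measurable g)
    (h : ELocallyIntegrableOn g V volume) :
    ELocallyIntegrableOn (g ∘ π) U volume :=
  bertini_submersion_case_general k m U V hU hV π hπ hUV hsub g hg h
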